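/- Let m ≥ 3 be an integer, let η > 0, ρ ∈ (0, 1], and θ, ϑ ∈ ℝ be such that ρe^{iθ} ∈ 𝒫_m. If R is a real number with R ≥ 2^{5/2} η / cos(π/m), then the real sequence t_k := R + 2η ρ^{k−1} cos((k−1)θ + ϑ) (k ≥ 1), which is the impulse response of H₁(z) = ηe^{iϑ}/(z − ρe^{iθ}) + ηe^{−iϑ}/(z − ρe^{−iθ}) + R/(z−1), admits a positive realization of dimension m. -/

import Mathlib

open Matrix

/-- A positive realization of dimension `M` of a real sequence `t` (relevant for `k ≥ 1`):
a triple `(A, b, c)` with all entries nonnegative such that `t k = cᵀ A^(k-1) b` for `k ≥ 1`. -/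
def IsPosRealization (M : ℕ) (A : Matrix (Fin M) (Fin M) ℝ)
    (b c : Fin M → ℝ) (t : ℕ → ℝ) : Prop :=
  (∀ i j, 0 ≤ A i j) ∧ (∀ i, 0 ≤ b i) ∧ (∀ i, 0 ≤ c i) ∧
    ∀ k : ℕ, 1 ≤ k → t k = c ⬝ᵥ (A ^ (k - 1)).mulVec b

/-- Membership in `𝒫_m`, the open regular `m`-gon with vertices at the `m`-th roots of unity:
`ρe^{iθ} ∈ 𝒫_m` iff `ρ cos((2k+1)π/m − θ) < cos(π/m)` for all `k = 0, …, m−1`.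
Since `Re (z · e^{-iα}) = ρ cos(α − θ)` for `z = ρe^{iθ}`, this is expressed as below. -/
def memP (m : ℕ) (z : ℂ) : Prop :=
  ∀ k : ℕ, k < m →
    (z * Complex.exp (-((((2 * k + 1) * Real.pi / m : ℝ) : ℂ) * Complex.I))).re
      < Real.cos (Real.pi / m)

lemma re_helper (ρ' x y : ℝ) :
    (((ρ' : ℂ)) * Complex.exp ((x:ℂ) * Complex.I) * Complex.exp (-((y:ℂ) * Complex.I))).re
      = ρ' * Real.cos (x - y) := by
  rw [mul_assoc, ← Complex.exp_add]
  have : (x:ℂ) * Complex.I + -((y:ℂ) * Complex.I) = ((x - y : ℝ) : ℂ) * Complex.I := by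
    push_cast; ring
  rw [this, Complex.re_ofReal_mul, Complex.exp_ofReal_mul_I_re]

-- sum of roots of unity

lemma sum_roots (m : ℕ) (hm : 2 ≤ m) :
    (∑ i : Fin m, Complex.exp (((2 * Real.pi * (i:ℕ) / m : ℝ) : ℂ) * Complex.I)) = 0 := by
  have hm0 : (m:ℂ) ≠ 0 := by
    exact_mod_cast Nat.cast_ne_zero.mpr (by omega : m ≠ 0)
  set ζ : ℂ := Complex.exp (((2 * Real.pi / m : ℝ) : ℂ) * Complex.I) with hζ
  have hpow : ∀ i : ℕ, Complex.exp (((2 * Real.pi * (i:ℕ) / m : ℝ) : ℂ) * Complex.I) = ζ ^ i := by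
    intro i
    rw [hζ, ← Complex.exp_nat_mul]
    congr 1
    push_cast
    ring
  have hζm : ζ ^ m = 1 := by
    rw [hζ, ← Complex.exp_nat_mul]
    have : (m:ℂ) * (((2 * Real.pi / m : ℝ) : ℂ) * Complex.I) = ((2 * Real.pi : ℝ) : ℂ) * Complex.I := by
      push_cast
      field_simp
    rw [this]
    simpa using Complex.exp_int_mul_two_pi_mul_I 1
  have hζ1 : ζ ≠ 1 := by
    intro h
    rw [hζ, Complex.exp_eq_one_iff] at h
    obtain ⟨n, hn⟩ := h
    have hn' : ((2 * Real.pi / m : ℝ) : ℂ) * Complex.I = ((n : ℂ) * (2 * Real.pi)) * Complex.I := by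
      rw [hn]; ring
    have h2 := mul_right_cancel₀ Complex.I_ne_zero hn'
    have h3 : (2 * Real.pi / m : ℝ) = (n : ℝ) * (2 * Real.pi) := by
      exact_mod_cast h2
    have hπ : (0:ℝ) < Real.pi := Real.pi_pos
    have hmR : (0:ℝ) < (m:ℝ) := by positivity
    have h3' : 2 * Real.pi = (n:ℝ) * (2 * Real.pi) * m := by
      field_simp at h3
      linear_combination (2 * Real.pi) * h3
    have h4 : (n:ℝ) * m = 1 := by
      have h2π : (0:ℝ) < 2 * Real.pi := by positivity
      have hz : 2 * Real.pi * ((n:ℝ) * m - 1) = 0 := by linear_combination (-1 : ℝ) * h3'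
      have := (mul_eq_zero.mp hz).resolve_left (ne_of_gt h2π)
      linarith
    have h5 : n * (m:ℤ) = 1 := by exact_mod_cast h4
    have h6 : (m:ℤ) ≤ 1 := Int.le_of_dvd one_pos ⟨n, by linarith⟩
    have : (2:ℤ) ≤ (m:ℤ) := by exact_mod_cast hm
    omega
  have := geom_sum_mul ζ m
  rw [hζm, sub_self] at this
  have hsum : (∑ i ∈ Finset.range m, ζ ^ i) = 0 := by
    rcases mul_eq_zero.mp this with h | h
    · exact h
    · exact absurd (sub_eq_zero.mp h) hζ1
  calc (∑ i : Fin m, Complex.exp (((2 * Real.pi * (i:ℕ) / m : ℝ) : ℂ) * Complex.I))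
      = ∑ i : Fin m, ζ ^ (i:ℕ) := Finset.sum_congr rfl fun i _ => hpow i
    _ = ∑ i ∈ Finset.range m, ζ ^ i := (Fin.sum_univ_eq_sum_range _ m)
    _ = 0 := hsum

lemma trig_e1 (a ψ : ℝ) :
    Real.sin (2 * a - ψ) + Real.sin ψ = 2 * Real.sin a * Real.cos (a - ψ) := by
  rw [Real.sin_sub, Real.sin_two_mul, Real.cos_two_mul, Real.cos_sub]
  linear_combination (-2 : ℝ) * Real.sin ψ * (Real.sin_sq_add_cos_sq a)

lemma vertex_eq (ρ' a ψ : ℝ) (hs : Real.sin (2 * a) ≠ 0) :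
    ((ρ' * Real.sin (2 * a - ψ) / Real.sin (2 * a) : ℝ) : ℂ)
      + ((ρ' * Real.sin ψ / Real.sin (2 * a) : ℝ) : ℂ) * Complex.exp (((2 * a : ℝ) : ℂ) * Complex.I)
      = (ρ' : ℂ) * Complex.exp (((ψ : ℝ) : ℂ) * Complex.I) := by
  apply Complex.ext
  · simp only [Complex.add_re, Complex.ofReal_re, Complex.re_ofReal_mul,
      Complex.exp_ofReal_mul_I_re]
    rw [Real.sin_sub]
    field_simp
    ring
  · simp only [Complex.add_im, Complex.ofReal_im, Complex.im_ofReal_mul,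
      Complex.exp_ofReal_mul_I_im]
    field_simp
    ring

lemma exp_shift (x : ℝ) (q : ℤ) :
    Complex.exp (((x + q * (2 * Real.pi) : ℝ) : ℂ) * Complex.I)
      = Complex.exp (((x : ℝ) : ℂ) * Complex.I) := by
  push_cast
  rw [add_mul, Complex.exp_add]
  rw [show (q:ℂ) * (2 * ↑Real.pi) * Complex.I = (q:ℂ) * (2 * ↑Real.pi * Complex.I) by ring]
  rw [Complex.exp_int_mul_two_pi_mul_I q, mul_one]

lemma vertex_wrap (m k : ℕ) (hm : 3 ≤ m) :
    Complex.exp (((2 * Real.pi * (((k+1) % m : ℕ):ℕ) / m : ℝ) : ℂ) * Complex.I)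
        = Complex.exp (((2 * Real.pi * ((k:ℝ)+1) / m : ℝ) : ℂ) * Complex.I) := by
  have hm0 : (m:ℝ) ≠ 0 := by positivity
  have h0 : ((((k+1) % m + m * ((k+1)/m) : ℕ)) : ℝ) = ((k+1 : ℕ) : ℝ) := by
    exact_mod_cast congrArg (Nat.cast : ℕ → ℝ) (Nat.mod_add_div (k+1) m)
  have hq : ((((k+1) % m : ℕ)) : ℝ) + (((k+1)/m : ℕ) : ℝ) * (m:ℝ) = (k:ℝ) + 1 := by
    push_cast at h0
    linarith
  have hqr : (((((k+1)/m : ℕ) : ℤ)) : ℝ) = (((k+1)/m : ℕ) : ℝ) := by push_cast; rfl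
  have harg : (2 * Real.pi * ((k:ℝ)+1) / m : ℝ)
      = 2 * Real.pi * (((k+1) % m : ℕ)) / m + (((((k+1)/m : ℕ) : ℤ)) : ℝ) * (2 * Real.pi) := by
    rw [hqr]
    field_simp
    linear_combination (-1 : ℝ) * hq
  rw [harg, exp_shift]

lemma combo_eq (m k : ℕ) (hm : 3 ≤ m) (a ρ' ψ φ' β γ : ℝ) (z : ℂ)
    (hmR : (0:ℝ) < m)
    (ha_def : a = Real.pi / m) (hψ_def : ψ = φ' - (k:ℝ) * (2 * a))
    (hvert : (β:ℂ) + (γ:ℂ) * Complex.exp (((2 * a : ℝ) : ℂ) * Complex.I)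
         = (ρ':ℂ) * Complex.exp (((ψ:ℝ):ℂ) * Complex.I))
    (hexpz : (ρ':ℂ) * Complex.exp (((φ':ℝ):ℂ) * Complex.I) = z) :
    (β:ℂ) * Complex.exp (((2 * Real.pi * (k:ℕ) / m : ℝ) : ℂ) * Complex.I) +
      (γ:ℂ) * Complex.exp (((2 * Real.pi * (((k+1) % m : ℕ):ℕ) / m : ℝ) : ℂ) * Complex.I) = z := by
  rw [vertex_wrap m k hm]
  have e2 : ((2 * Real.pi * (k:ℕ) / m : ℝ) : ℂ) * Complex.I
      = (((k:ℝ) * (2*a) : ℝ) : ℂ) * Complex.I := by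
    rw [ha_def]
    push_cast
    rw [show 2 * (Real.pi:ℂ) * (k:ℂ) / (m:ℂ) = (k:ℂ) * (2 * ((Real.pi:ℂ) / (m:ℂ))) by ring]
  have e3 : ((2 * Real.pi * ((k:ℝ)+1) / m : ℝ) : ℂ) * Complex.I
      = ((((k:ℝ) * (2*a) : ℝ) : ℂ) + ((2*a : ℝ) : ℂ)) * Complex.I := by
    rw [ha_def]
    push_cast
    have hmC : (m:ℂ) ≠ 0 := by exact_mod_cast ne_of_gt hmR
    field_simp
  rw [e2, e3, add_mul, Complex.exp_add]
  calc (β:ℂ) * Complex.exp ((((k:ℝ) * (2*a) : ℝ):ℂ) * Complex.I)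
        + (γ:ℂ) * (Complex.exp ((((k:ℝ) * (2*a) : ℝ):ℂ) * Complex.I) * Complex.exp (((2*a : ℝ):ℂ) * Complex.I))
      = Complex.exp ((((k:ℝ) * (2*a) : ℝ):ℂ) * Complex.I)
          * ((β:ℂ) + (γ:ℂ) * Complex.exp (((2*a : ℝ):ℂ) * Complex.I)) := by ring
    _ = Complex.exp ((((k:ℝ) * (2*a) : ℝ):ℂ) * Complex.I)
          * ((ρ':ℂ) * Complex.exp (((ψ:ℝ):ℂ) * Complex.I)) := by rw [hvert]
    _ = (ρ':ℂ) * Complex.exp (((φ' : ℝ):ℂ) * Complex.I) := by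
        rw [← mul_assoc, mul_comm _ ((ρ':ℂ)), mul_assoc, ← Complex.exp_add]
        congr 2
        rw [hψ_def]
        push_cast
        ring
    _ = z := hexpz

lemma hull_mem (m : ℕ) (hm : 3 ≤ m) (z : ℂ)
    (h : ∀ k : ℕ, k < m →
      (z * Complex.exp (-((((2 * k + 1) * Real.pi / m : ℝ) : ℂ) * Complex.I))).re
        ≤ Real.cos (Real.pi / m)) :
    ∃ w : Fin m → ℝ, (∀ i, 0 ≤ w i) ∧ (∑ i, w i) = 1 ∧
      (∑ i, ((w i : ℝ) : ℂ) * Complex.exp (((2 * Real.pi * (i:ℕ) / m : ℝ) : ℂ) * Complex.I)) = z := by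
  have hπ : (0:ℝ) < Real.pi := Real.pi_pos
  have hmR : (0:ℝ) < (m:ℝ) := by positivity
  have hm3 : (3:ℝ) ≤ (m:ℝ) := by exact_mod_cast hm
  set a : ℝ := Real.pi / m with ha_def
  have ham : (m:ℝ) * (2 * a) = 2 * Real.pi := by rw [ha_def]; field_simp
  have ha : 0 < a := by positivity
  have ha3 : a ≤ Real.pi / 3 := by
    rw [ha_def]; exact div_le_div_of_nonneg_left hπ.le (by norm_num) hm3
  clear_value a
  have hsa : 0 < Real.sin a := Real.sin_pos_of_pos_of_lt_pi ha (by linarith)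
  have hca : 0 < Real.cos a := Real.cos_pos_of_mem_Ioo ⟨by linarith, by linarith [Real.pi_gt_three]⟩
  have h2alt : 2 * a < Real.pi := by linarith [Real.pi_gt_three]
  have hs : 0 < Real.sin (2 * a) := Real.sin_pos_of_pos_of_lt_pi (by linarith) h2alt
  -- polar decomposition
  set ρ' : ℝ := ‖z‖ with hρ'_def
  have hρ'0 : 0 ≤ ρ' := norm_nonneg z
  set φ : ℝ := Complex.arg z with hφ_def
  have hz : (ρ' : ℂ) * Complex.exp ((φ:ℂ) * Complex.I) = z := Complex.norm_mul_exp_arg_mul_I z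
  have hφlo : -Real.pi < φ := Complex.neg_pi_lt_arg z
  have hφhi : φ ≤ Real.pi := Complex.arg_le_pi z
  clear_value ρ' φ
  obtain ⟨φ', hφ'0, hφ'2, hexp', hcosφ⟩ :
      ∃ φ' : ℝ, 0 ≤ φ' ∧ φ' < 2 * Real.pi ∧
        Complex.exp ((φ':ℂ) * Complex.I) = Complex.exp ((φ:ℂ) * Complex.I) ∧
        ∀ y : ℝ, Real.cos (φ' - y) = Real.cos (φ - y) := by
    rcases lt_or_ge φ 0 with hneg | hpos
    · refine ⟨φ + 2 * Real.pi, by linarith, by linarith, ?_, ?_⟩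
      · have := exp_shift φ 1
        rw [show φ + (1:ℤ) * (2 * Real.pi) = φ + 2 * Real.pi by push_cast; ring] at this
        exact this
      · intro y
        rw [show φ + 2 * Real.pi - y = (φ - y) + 2 * Real.pi by ring, Real.cos_add_two_pi]
    · exact ⟨φ, hpos, by linarith, rfl, fun _ => rfl⟩
  have hφ'2' : φ' < (m:ℝ) * (2 * a) := by rw [ham]; exact hφ'2
  -- sector index
  set k : ℕ := (⌊φ' / (2 * a)⌋).toNat with hk_def
  have hfloor0 : 0 ≤ ⌊φ' / (2 * a)⌋ := Int.floor_nonneg.mpr (by positivity)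
  have hkcast : (k:ℝ) = ⌊φ' / (2 * a)⌋ := by
    rw [hk_def]; exact_mod_cast Int.toNat_of_nonneg hfloor0
  clear_value k
  have h2a0 : (0:ℝ) < 2 * a := by linarith
  have hk1 : (k:ℝ) * (2 * a) ≤ φ' := by
    rw [hkcast]
    calc (⌊φ' / (2 * a)⌋ : ℝ) * (2 * a) ≤ (φ' / (2 * a)) * (2 * a) :=
          mul_le_mul_of_nonneg_right (Int.floor_le _) h2a0.le
      _ = φ' := by field_simp
  have hk2 : φ' < ((k:ℝ) + 1) * (2 * a) := by
    rw [hkcast]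
    calc φ' = (φ' / (2 * a)) * (2 * a) := by field_simp
      _ < ((⌊φ' / (2 * a)⌋ : ℝ) + 1) * (2 * a) :=
          mul_lt_mul_of_pos_right (Int.lt_floor_add_one _) h2a0
  have hkm : k < m := by
    by_contra hc
    push_neg at hc
    have : (m:ℝ) * (2*a) ≤ (k:ℝ) * (2*a) :=
      mul_le_mul_of_nonneg_right (by exact_mod_cast hc) h2a0.le
    linarith
  -- ψ
  set ψ : ℝ := φ' - (k:ℝ) * (2 * a) with hψ_def
  have hψ0 : 0 ≤ ψ := by rw [hψ_def]; linarith
  have hψ2a : ψ < 2 * a := by rw [hψ_def]; nlinarith [hk2]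
  -- key inequality from h k
  have hkey : ρ' * Real.cos (ψ - a) ≤ Real.cos a := by
    have hhk := h k hkm
    rw [← hz, re_helper] at hhk
    have h2 : Real.cos (φ - (2 * (k:ℝ) + 1) * Real.pi / m) = Real.cos (ψ - a) := by
      rw [show φ - (2 * (k:ℝ) + 1) * Real.pi / m = φ - ((2 * (k:ℝ) + 1) * a) by rw [ha_def]; ring]
      rw [← hcosφ ((2 * (k:ℝ) + 1) * a)]
      congr 1
      rw [hψ_def]; ring
    rw [h2] at hhk
    exact hhk
  clear_value ψ
  -- β γ
  set s : ℝ := Real.sin (2 * a) with hs_def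
  set β : ℝ := ρ' * Real.sin (2 * a - ψ) / s with hβ_def
  set γ : ℝ := ρ' * Real.sin ψ / s with hγ_def
  have hsin2aψ : 0 ≤ Real.sin (2 * a - ψ) :=
    Real.sin_nonneg_of_nonneg_of_le_pi (by linarith) (by linarith)
  have hsinψ : 0 ≤ Real.sin ψ :=
    Real.sin_nonneg_of_nonneg_of_le_pi hψ0 (by linarith)
  have hβ0 : 0 ≤ β := by rw [hβ_def]; positivity
  have hγ0 : 0 ≤ γ := by rw [hγ_def]; positivity
  have hβγ : β + γ ≤ 1 := by
    rw [hβ_def, hγ_def, ← add_div, div_le_one hs]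
    have hc2 : Real.cos (a - ψ) = Real.cos (ψ - a) := by
      rw [← Real.cos_neg (a - ψ)]; congr 1; ring
    calc ρ' * Real.sin (2*a - ψ) + ρ' * Real.sin ψ
        = 2 * Real.sin a * (ρ' * Real.cos (ψ - a)) := by
          rw [← hc2]; linear_combination ρ' * trig_e1 a ψ
      _ ≤ 2 * Real.sin a * Real.cos a := by
          apply mul_le_mul_of_nonneg_left hkey (by positivity)
      _ = Real.sin (2 * a) := (Real.sin_two_mul a).symm
  -- the vertex combination
  have hvert : (β:ℂ) + (γ:ℂ) * Complex.exp (((2 * a : ℝ) : ℂ) * Complex.I)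
      = (ρ':ℂ) * Complex.exp (((ψ:ℝ):ℂ) * Complex.I) := by
    rw [hβ_def, hγ_def, hs_def]
    exact vertex_eq ρ' a ψ hs.ne'
  clear_value β γ
  -- indices
  have hkm' : (k+1) % m < m := Nat.mod_lt _ (by omega)
  have hKK' : (⟨k, hkm⟩ : Fin m) ≠ ⟨(k+1) % m, hkm'⟩ := by
    simp only [Ne, Fin.mk.injEq]
    rcases Nat.lt_or_ge (k+1) m with h1 | h1
    · rw [Nat.mod_eq_of_lt h1]; omega
    · have hkm1 : k + 1 = m := by omega
      rw [hkm1, Nat.mod_self]; omega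
  refine ⟨fun i => (1 - β - γ)/m + (if i = ⟨k, hkm⟩ then β else 0)
      + (if i = ⟨(k+1) % m, hkm'⟩ then γ else 0), ?_, ?_, ?_⟩
  · intro i
    beta_reduce
    have h0 : 0 ≤ (1 - β - γ)/m := div_nonneg (by linarith) hmR.le
    split_ifs <;> linarith
  · rw [Finset.sum_add_distrib, Finset.sum_add_distrib, Finset.sum_const, Finset.card_univ,
      Fintype.card_fin, Finset.sum_ite_eq' Finset.univ, Finset.sum_ite_eq' Finset.univ]
    simp only [Finset.mem_univ, if_true, nsmul_eq_mul]
    have hmm : (m:ℝ) * ((1 - β - γ)/m) = 1 - β - γ := by field_simp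
    rw [hmm]; ring
  · have hsplit : ∀ i : Fin m,
        ((((1 - β - γ)/m + (if i = (⟨k, hkm⟩ : Fin m) then β else 0)
          + (if i = (⟨(k+1) % m, hkm'⟩ : Fin m) then γ else 0)) : ℝ) : ℂ)
          * Complex.exp (((2 * Real.pi * (i:ℕ) / m : ℝ) : ℂ) * Complex.I)
        = (((1 - β - γ)/m : ℝ) : ℂ) * Complex.exp (((2 * Real.pi * (i:ℕ) / m : ℝ) : ℂ) * Complex.I)
          + (if i = (⟨k, hkm⟩ : Fin m) then (β:ℂ) * Complex.exp (((2 * Real.pi * (i:ℕ) / m : ℝ) : ℂ) * Complex.I) else 0)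
          + (if i = (⟨(k+1) % m, hkm'⟩ : Fin m) then (γ:ℂ) * Complex.exp (((2 * Real.pi * (i:ℕ) / m : ℝ) : ℂ) * Complex.I) else 0) := by
      intro i
      split_ifs <;> push_cast <;> ring
    rw [Finset.sum_congr rfl (fun i _ => hsplit i), Finset.sum_add_distrib, Finset.sum_add_distrib,
      Finset.sum_ite_eq' Finset.univ, Finset.sum_ite_eq' Finset.univ, ← Finset.mul_sum,
      sum_roots m (by omega)]
    simp only [Finset.mem_univ, if_true, mul_zero, zero_add]
    clear hsplit h hφ_def hρ'_def hcosφ hkcast hfloor0 hk_def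
    have hexpz : (ρ':ℂ) * Complex.exp (((φ':ℝ):ℂ) * Complex.I) = z := by rw [hexp']; exact hz
    exact combo_eq m k hm a ρ' ψ φ' β γ z hmR ha_def hψ_def hvert hexpz

lemma cos_shift (x y : ℝ) (t : ℤ) (hxy : x = -y + t * (2 * Real.pi)) :
    Real.cos x = Real.cos y := by
  rw [hxy, Real.cos_add_int_mul_two_pi, Real.cos_neg]

lemma angle_rel (m j k l q : ℕ) (θ : ℝ) (hmR : (0:ℝ) < m)
    (hrel : (l:ℝ) + m*q + k + 1 = j + m) :
    2*Real.pi*j/m - θ - (2*k+1)*Real.pi/m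
      = -(θ - (2*l+1)*Real.pi/m) + ((((q:ℤ) - 1) : ℤ) : ℝ) * (2 * Real.pi) := by
  have hm0 : (m:ℝ) ≠ 0 := ne_of_gt hmR
  push_cast
  field_simp
  linear_combination (-(2*Real.pi)) * hrel

lemma row_step (m : ℕ) (w f g : Fin m → ℝ) (R K C S x y : ℝ)
    (h1 : ∑ i, w i = 1) (hc : ∑ i, w i * f i = x) (hs : ∑ i, w i * g i = y) :
    ∑ i, w i * (R + K * (f i * C + g i * S)) = R + K * (x * C + y * S) := by
  have he : ∀ i : Fin m, w i * (R + K * (f i * C + g i * S))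
      = w i * R + (w i * f i) * (K * C) + (w i * g i) * (K * S) := fun i => by ring
  rw [Finset.sum_congr rfl fun i _ => he i, Finset.sum_add_distrib, Finset.sum_add_distrib,
    ← Finset.sum_mul, ← Finset.sum_mul, ← Finset.sum_mul, h1, hc, hs]
  ring

lemma re_term (w x : ℝ) :
    (((w:ℝ):ℂ) * Complex.exp (((x:ℝ):ℂ) * Complex.I)).re = w * Real.cos x := by
  rw [Complex.re_ofReal_mul, Complex.exp_ofReal_mul_I_re]

lemma im_term (w x : ℝ) :
    (((w:ℝ):ℂ) * Complex.exp (((x:ℝ):ℂ) * Complex.I)).im = w * Real.sin x := by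
  rw [Complex.im_ofReal_mul, Complex.exp_ofReal_mul_I_im]

/-- Improved Proposition 7 of Benvenuti–Farina–Anderson: if `ρe^{iθ} ∈ 𝒫_m` and
`R ≥ 2^{5/2} η / cos(π/m)`, then the impulse response
`t_k = R + 2ηρ^{k−1}cos((k−1)θ + ϑ)` of
`H₁(z) = ηe^{iϑ}/(z−ρe^{iθ}) + ηe^{−iϑ}/(z−ρe^{−iθ}) + R/(z−1)`
admits an `m`-dimensional positive realization. -/
theorem complex_pair_positive_realization
    (m : ℕ) (hm : 3 ≤ m) (η ρ θ ϑ R : ℝ)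
    (hη : 0 < η) (hρ : 0 < ρ) (hρ1 : ρ ≤ 1)
    (hpoly : memP m ((ρ : ℂ) * Complex.exp ((θ : ℂ) * Complex.I)))
    (hR : (2 : ℝ) ^ ((5 : ℝ) / 2) * η / Real.cos (Real.pi / m) ≤ R)
    (t : ℕ → ℝ)
    (ht : ∀ k : ℕ, 1 ≤ k →
      t k = R + 2 * η * ρ ^ (k - 1) * Real.cos ((k - 1 : ℕ) * θ + ϑ)) :
    ∃ (A : Matrix (Fin m) (Fin m) ℝ) (b c : Fin m → ℝ),
      IsPosRealization m A b c t := by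
  have hπ : (0:ℝ) < Real.pi := Real.pi_pos
  have hmR : (0:ℝ) < (m:ℝ) := by positivity
  have hm3 : (3:ℝ) ≤ (m:ℝ) := by exact_mod_cast hm
  have hca : 0 < Real.cos (Real.pi / m) := by
    apply Real.cos_pos_of_mem_Ioo
    constructor
    · have : 0 < Real.pi / m := by positivity
      linarith
    · have h1 : Real.pi / m ≤ Real.pi / 3 :=
        div_le_div_of_nonneg_left hπ.le (by norm_num) hm3
      linarith [Real.pi_gt_three]
  have hR2 : 2 * η ≤ R := by
    have h1 : (2:ℝ) ≤ (2:ℝ) ^ ((5:ℝ)/2) := by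
      calc (2:ℝ) = (2:ℝ) ^ (1:ℝ) := (Real.rpow_one 2).symm
        _ ≤ (2:ℝ) ^ ((5:ℝ)/2) :=
          Real.rpow_le_rpow_of_exponent_le (by norm_num) (by norm_num)
    have h2 : (2:ℝ) ^ ((5:ℝ)/2) * η ≤ (2:ℝ) ^ ((5:ℝ)/2) * η / Real.cos (Real.pi/m) := by
      have h3 := div_le_div_of_nonneg_left
        (by positivity : (0:ℝ) ≤ (2:ℝ)^((5:ℝ)/2)*η) hca (Real.cos_le_one _)
      simpa using h3
    nlinarith [h1, h2, hη.le]
  -- row weights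
  have hrow : ∀ j : Fin m, ∃ w : Fin m → ℝ, (∀ i, 0 ≤ w i) ∧ (∑ i, w i) = 1 ∧
      (∑ i, ((w i : ℝ):ℂ) * Complex.exp (((2*Real.pi*(i:ℕ)/m : ℝ):ℂ) * Complex.I))
        = (ρ:ℂ) * Complex.exp (((2*Real.pi*(j:ℕ)/m - θ : ℝ):ℂ) * Complex.I) := by
    intro j
    apply hull_mem m hm
    intro k hk
    have hre : (((ρ:ℝ):ℂ) * Complex.exp (((2*Real.pi*(j:ℕ)/m - θ : ℝ):ℂ) * Complex.I)
        * Complex.exp (-((((2*(k:ℕ)+1)*Real.pi/m : ℝ):ℂ) * Complex.I))).re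
        = ρ * Real.cos ((2*Real.pi*(j:ℕ)/m - θ) - (2*(k:ℕ)+1)*Real.pi/m) :=
      re_helper ρ _ _
    rw [hre]
    set n : ℕ := (j:ℕ) + (m - 1 - k) with hn_def
    have hdm : m * (n / m) + n % m = n := Nat.div_add_mod n m
    have hlm : n % m < m := Nat.mod_lt _ (by omega)
    have hrel : ((n % m : ℕ):ℝ) + (m:ℝ)*((n / m : ℕ):ℝ) + (k:ℝ) + 1 = ((j:ℕ):ℝ) + (m:ℝ) := by
      have hjm : (j:ℕ) < m := j.isLt
      have hrn : n % m + m*(n / m) + k + 1 = (j:ℕ) + m := by omega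
      exact_mod_cast hrn
    have hcs : Real.cos ((2*Real.pi*(j:ℕ)/m - θ) - (2*(k:ℕ)+1)*Real.pi/m)
        = Real.cos (θ - (2*((n % m : ℕ):ℝ)+1)*Real.pi/m) := by
      have har := angle_rel m (j:ℕ) k (n % m) (n / m) θ hmR hrel
      have hx : (2*Real.pi*(j:ℕ)/m - θ) - (2*(k:ℕ)+1)*Real.pi/m
          = 2*Real.pi*(j:ℕ)/m - θ - (2*(k:ℕ)+1)*Real.pi/m := by ring
      rw [hx]
      exact cos_shift _ _ (((n / m : ℕ):ℤ) - 1) har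
    rw [hcs]
    have hpl := hpoly (n % m) hlm
    rw [re_helper ρ θ ((2*((n % m : ℕ):ℝ)+1)*Real.pi/m)] at hpl
    exact le_of_lt hpl
  choose W hW0 hW1 hW2 using hrow
  have hWcos : ∀ j : Fin m, (∑ i, W j i * Real.cos (2*Real.pi*(i:ℕ)/m))
      = ρ * Real.cos (2*Real.pi*(j:ℕ)/m - θ) := by
    intro j
    have h := congrArg Complex.re (hW2 j)
    rw [Complex.re_sum] at h
    simp only [re_term] at h
    exact h
  have hWsin : ∀ j : Fin m, (∑ i, W j i * Real.sin (2*Real.pi*(i:ℕ)/m))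
      = ρ * Real.sin (2*Real.pi*(j:ℕ)/m - θ) := by
    intro j
    have h := congrArg Complex.im (hW2 j)
    rw [Complex.im_sum] at h
    simp only [im_term] at h
    exact h
  haveI : NeZero m := ⟨by omega⟩
  set A : Matrix (Fin m) (Fin m) ℝ := Matrix.of (fun j i => W j i) with hA_def
  set b : Fin m → ℝ := fun j => R + 2*η*Real.cos (2*Real.pi*(j:ℕ)/m - ϑ) with hb_def
  set c : Fin m → ℝ := fun j => if j = 0 then 1 else 0 with hc_def
  have hinv : ∀ n : ℕ, (A ^ n).mulVec b
      = fun j : Fin m => R + 2*η*ρ^n * Real.cos (2*Real.pi*(j:ℕ)/m - ((n:ℝ)*θ + ϑ)) := by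
    intro n
    induction n with
    | zero =>
      rw [pow_zero, Matrix.one_mulVec]
      funext j
      rw [hb_def]
      norm_num
    | succ n ih =>
      rw [pow_succ', ← Matrix.mulVec_mulVec, ih]
      funext j
      show (∑ i, A j i * (R + 2*η*ρ^n * Real.cos (2*Real.pi*(i:ℕ)/m - ((n:ℝ)*θ + ϑ)))) = _
      have hterm : ∀ i : Fin m,
          R + 2*η*ρ^n * Real.cos (2*Real.pi*(i:ℕ)/m - ((n:ℝ)*θ + ϑ))
          = R + (2*η*ρ^n) * (Real.cos (2*Real.pi*(i:ℕ)/m) * Real.cos ((n:ℝ)*θ + ϑ)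
              + Real.sin (2*Real.pi*(i:ℕ)/m) * Real.sin ((n:ℝ)*θ + ϑ)) := by
        intro i; rw [Real.cos_sub]
      rw [Finset.sum_congr rfl fun i _ => by rw [hterm i]]
      have hAW : ∀ i, A j i = W j i := fun i => rfl
      rw [Finset.sum_congr rfl fun i _ => by rw [hAW i]]
      rw [row_step m (W j) _ _ R (2*η*ρ^n) (Real.cos ((n:ℝ)*θ+ϑ)) (Real.sin ((n:ℝ)*θ+ϑ))
        _ _ (hW1 j) (hWcos j) (hWsin j)]
      have hfin : Real.cos (2*Real.pi*(j:ℕ)/m - (((n+1:ℕ):ℝ)*θ + ϑ))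
          = Real.cos (2*Real.pi*(j:ℕ)/m - θ) * Real.cos ((n:ℝ)*θ + ϑ)
            + Real.sin (2*Real.pi*(j:ℕ)/m - θ) * Real.sin ((n:ℝ)*θ + ϑ) := by
        have hangle : 2*Real.pi*(j:ℕ)/m - (((n+1:ℕ):ℝ)*θ + ϑ)
            = (2*Real.pi*(j:ℕ)/m - θ) - ((n:ℝ)*θ + ϑ) := by push_cast; ring
        rw [hangle, Real.cos_sub]
      rw [hfin]
      ring
  refine ⟨A, b, c, ?_, ?_, ?_, ?_⟩
  · intro i j
    exact hW0 i j
  · intro j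
    rw [hb_def]
    have := Real.neg_one_le_cos (2*Real.pi*(j:ℕ)/m - ϑ)
    nlinarith [hη.le]
  · intro i
    rw [hc_def]
    dsimp only
    split <;> norm_num
  · intro k hk
    rw [ht k hk, hinv (k-1)]
    rw [hc_def]
    show _ = ∑ j : Fin m, (if j = 0 then (1:ℝ) else 0) *
      (R + 2*η*ρ^(k-1) * Real.cos (2*Real.pi*(j:ℕ)/m - (((k-1:ℕ):ℝ)*θ + ϑ)))
    have hsplit : ∀ j : Fin m, (if j = 0 then (1:ℝ) else 0) *
        (R + 2*η*ρ^(k-1) * Real.cos (2*Real.pi*(j:ℕ)/m - (((k-1:ℕ):ℝ)*θ + ϑ)))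
        = (if j = 0 then R + 2*η*ρ^(k-1) * Real.cos (2*Real.pi*(j:ℕ)/m - (((k-1:ℕ):ℝ)*θ + ϑ)) else 0) := by
      intro j; split <;> ring
    rw [Finset.sum_congr rfl fun j _ => hsplit j, Finset.sum_ite_eq' Finset.univ]
    simp only [Finset.mem_univ, if_true]
    have h0 : ((0 : Fin m) : ℕ) = 0 := by
      have : NeZero m := ⟨by omega⟩
      simp
    rw [h0]
    have : 2*Real.pi*(0:ℕ)/m - (((k-1:ℕ):ℝ)*θ + ϑ) = -(((k-1:ℕ):ℝ)*θ + ϑ) := by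
      push_cast; ring
    rw [this, Real.cos_neg]
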